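/- Fix t₀ < t_f, dimensions n, m, a nonempty compact set U ⊆ ℝ^m, a continuous map f̃ : ℝ × ℝⁿ × ℝ^m → ℝⁿ, an integer r ≥ 1, orders v₁, …, v_r > 0, continuous functions g₁, …, g_r : ℝ × ℝⁿ × ℝ^m → ℝ, and a continuous terminal cost h : ℝⁿ → ℝ. Assume the value function V is real-valued and differentiable at a point (t, x) with t ∈ [t₀, t_f) and x ∈ ℝⁿ. Let ω ∈ U be such that there exists an admissible pair (x(·), u(·)) from (t, x) with u right-continuous at t, u(t) = ω. Then the following subsolution inequality holds: ∂V/∂t (t, x) + Σ_{j=1}^r (1/Γ(v_j)) (t_f − t)^{v_j−1} g_j(t, x, ω) + ⟨∇_x V(t, x), f̃(t, x, ω)⟩ ≥ 0. -/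

import Mathlib

open MeasureTheory Set

noncomputable section

/-- An **admissible pair** `(x, u)` from `(t, x₀)` for the controlled dynamics
`ẋ = f̃(τ, x, u)` on `[t, t_f]`: `u` is a measurable control taking values in the
control set `U`, and `x` is a continuous trajectory satisfying the integral form of
the dynamics, `x(τ) = x₀ + ∫_t^τ f̃(σ, x(σ), u(σ)) dσ` for all `τ ∈ [t, t_f]`. -/
structure AdmissiblePair (tf : ℝ) {n m : ℕ} (U : Set (EuclideanSpace ℝ (Fin m)))
    (ftil : ℝ → EuclideanSpace ℝ (Fin n) → EuclideanSpace ℝ (Fin m) →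
      EuclideanSpace ℝ (Fin n))
    (t : ℝ) (x0 : EuclideanSpace ℝ (Fin n)) where
  x : ℝ → EuclideanSpace ℝ (Fin n)
  u : ℝ → EuclideanSpace ℝ (Fin m)
  u_mem : ∀ τ ∈ Icc t tf, u τ ∈ U
  u_meas : Measurable ((Icc t tf).restrict u)
  x_cont : ContinuousOn x (Icc t tf)
  x_eq : ∀ τ ∈ Icc t tf, x τ = x0 + ∫ σ in t..τ, ftil σ (x σ) (u σ)

/-- The **generalized (fractional-order) performance index** of an admissible pair:
`J(t, x₀; x, u) = Σ_j (1/Γ(v_j)) ∫_t^{t_f} (t_f - τ)^(v_j - 1) g_j(τ, x(τ), u(τ)) dτ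
  + h(x(t_f))`, with kernels anchored at the fixed final time `t_f`. -/
def fracCost (tf : ℝ) {n m : ℕ} {U : Set (EuclideanSpace ℝ (Fin m))}
    {ftil : ℝ → EuclideanSpace ℝ (Fin n) → EuclideanSpace ℝ (Fin m) →
      EuclideanSpace ℝ (Fin n)}
    {r : ℕ} (v : Fin r → ℝ)
    (g : Fin r → ℝ → EuclideanSpace ℝ (Fin n) → EuclideanSpace ℝ (Fin m) → ℝ)
    (h : EuclideanSpace ℝ (Fin n) → ℝ)
    {t : ℝ} {x0 : EuclideanSpace ℝ (Fin n)} (p : AdmissiblePair tf U ftil t x0) : ℝ :=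
  (∑ j, (1 / Real.Gamma (v j)) *
      ∫ τ in t..tf, (tf - τ) ^ (v j - 1) * g j τ (p.x τ) (p.u τ)) + h (p.x tf)

/-- The **value function**: the infimum, in the extended reals, of the generalized
performance index over all admissible pairs from `(t, x₀)`. -/
def fracValue (tf : ℝ) {n m : ℕ} (U : Set (EuclideanSpace ℝ (Fin m)))
    (ftil : ℝ → EuclideanSpace ℝ (Fin n) → EuclideanSpace ℝ (Fin m) →
      EuclideanSpace ℝ (Fin n))
    {r : ℕ} (v : Fin r → ℝ)
    (g : Fin r → ℝ → EuclideanSpace ℝ (Fin n) → EuclideanSpace ℝ (Fin m) → ℝ)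
    (h : EuclideanSpace ℝ (Fin n) → ℝ)
    (t : ℝ) (x0 : EuclideanSpace ℝ (Fin n)) : EReal :=
  ⨅ p : AdmissiblePair tf U ftil t x0, ((fracCost tf v g h p : ℝ) : EReal)

/-!
Along the given pair `p`, let `φ(s) = ∫_t^s (running cost of p) + V(s, p.x s)`.
Following `p` up to time `s` and then any admissible pair from `(s, p.x s)` is admissible from
`(t, x)`, so the infimum defining `V(t, x)` gives the dynamic programming inequality
`φ(t) = V(t, x) ≤ φ(s)` for `s ∈ [t, t_f]`. Hence `φ` has a one-sided minimum at `t`, and its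
right derivative there, which the fundamental theorem of calculus (using the right continuity of
`p.u` at `t`) and the chain rule identify with the left-hand side of the inequality, is
nonnegative.
-/

open Filter Topology intervalIntegral
open scoped Interval

section

variable {β : Type*} [NormedAddCommGroup β]

theorem MeasureTheory.IntegrableOn.intervalIntegrable_of_mem_Icc {f : ℝ → β} {a b c d : ℝ}
    (hf : IntegrableOn f (Icc a b)) (hc : c ∈ Icc a b) (hd : d ∈ Icc a b) :
    IntervalIntegrable f volume c d :=
  (hf.mono_set (uIcc_subset_Icc hc hd)).intervalIntegrable

variable [NormedSpace ℝ β]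

theorem integrableOn_Icc_sub_rpow {r : ℝ} (hr : -1 < r) (a b : ℝ) :
    IntegrableOn (fun σ => (b - σ) ^ r) (Icc a b) := by
  have h := (intervalIntegrable_rpow' (a := b - a) (b := 0) hr).comp_sub_left b
  simp only [sub_sub_cancel, sub_zero] at h
  rw [intervalIntegrable_iff'] at h
  exact h.mono_set Icc_subset_uIcc

theorem intervalIntegral.integral_ite_le {f g : ℝ → β} {a s b : ℝ} (has : a ≤ s) (hsb : s ≤ b)
    (hf : IntervalIntegrable f volume a s) (hg : IntervalIntegrable g volume s b) :
    ∫ σ in a..b, (if σ ≤ s then f σ else g σ) = (∫ σ in a..s, f σ) + ∫ σ in s..b, g σ := by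
  have hleft : EqOn f (fun σ => if σ ≤ s then f σ else g σ) (Ι a s) := fun σ hσ =>
    (if_pos (by rw [uIoc_of_le has] at hσ; exact hσ.2)).symm
  have hright : EqOn g (fun σ => if σ ≤ s then f σ else g σ) (Ι s b) := fun σ hσ =>
    (if_neg (by rw [uIoc_of_le hsb] at hσ; exact not_le.2 hσ.1)).symm
  rw [integral_congr_ae (ae_of_all _ hleft), integral_congr_ae (ae_of_all _ hright)]
  exact (integral_add_adjacent_intervals ((intervalIntegrable_congr hleft).1 hf)
    ((intervalIntegrable_congr hright).1 hg)).symm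

theorem hasDerivWithinAt_integral_Ici [CompleteSpace β] {Φ : ℝ → β} {a b : ℝ} (hab : a < b)
    (hm : AEStronglyMeasurable Φ (volume.restrict (Icc a b)))
    (hc : ContinuousWithinAt Φ (Ici a) a) :
    HasDerivWithinAt (fun s => ∫ σ in a..s, Φ σ) (Φ a) (Ici a) a :=
  integral_hasDerivWithinAt_right IntervalIntegrable.refl ⟨Icc a b, Icc_mem_nhdsGT hab, hm⟩
    (hc.mono Ioi_subset_Ici_self)

theorem intervalIntegral.integral_comp_ite_le {α γ : Type*} (Ψ : ℝ → α → γ → β)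
    {x₁ x₂ : ℝ → α} {u₁ u₂ : ℝ → γ} {a s b : ℝ}
    (has : a ≤ s) (hsb : s ≤ b)
    (h₁ : IntervalIntegrable (fun σ => Ψ σ (x₁ σ) (u₁ σ)) volume a s)
    (h₂ : IntervalIntegrable (fun σ => Ψ σ (x₂ σ) (u₂ σ)) volume s b) :
    ∫ σ in a..b, Ψ σ (if σ ≤ s then x₁ σ else x₂ σ) (if σ ≤ s then u₁ σ else u₂ σ) =
      (∫ σ in a..s, Ψ σ (x₁ σ) (u₁ σ)) + ∫ σ in s..b, Ψ σ (x₂ σ) (u₂ σ) := by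
  simp only [apply_ite₂ (Ψ _)]
  exact integral_ite_le has hsb h₁ h₂

end

theorem measurable_restrict_Icc_ite {α : Type*} [MeasurableSpace α] {f g : ℝ → α} {a s b : ℝ}
    (hsb : s ≤ b) (hf : Measurable ((Icc a b).restrict f))
    (hg : Measurable ((Icc s b).restrict g)) :
    Measurable ((Icc a b).restrict fun τ => if τ ≤ s then f τ else g τ) := by
  -- `g` is only known to be measurable on `[s, b]`, so read it there through `τ ↦ max τ s`.
  let proj : Icc a b → Icc s b := fun z => ⟨max z s, le_max_right _ _, max_le z.2.2 hsb⟩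
  have hproj : Measurable proj := (by fun_prop : Continuous proj).measurable
  have hite : ((Icc a b).restrict fun τ => if τ ≤ s then f τ else g τ) =
      fun z : Icc a b =>
        if (z : ℝ) ≤ s then (Icc a b).restrict f z else (Icc s b).restrict g (proj z) := by
    funext z
    by_cases hz : (z : ℝ) ≤ s
    · simp [Set.restrict, hz]
    · simp [Set.restrict, hz, proj, max_eq_left (not_le.1 hz).le]
  rw [hite]
  exact Measurable.ite (measurableSet_le measurable_subtype_coe measurable_const) hf
    (hg.comp hproj)

theorem continuousOn_Icc_ite {α : Type*} [TopologicalSpace α] {f g : ℝ → α} {a s b : ℝ}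
    (hf : ContinuousOn f (Icc a s)) (hg : ContinuousOn g (Icc s b)) (hfg : f s = g s) :
    ContinuousOn (fun τ => if τ ≤ s then f τ else g τ) (Icc a b) := by
  refine ContinuousOn.if ?_ (hf.mono ?_) (hg.mono ?_)
  · rintro τ ⟨-, hτ⟩
    rw [show {τ : ℝ | τ ≤ s} = Iic s from rfl, frontier_Iic] at hτ
    rwa [mem_singleton_iff.1 hτ]
  · rw [show {τ : ℝ | τ ≤ s} = Iic s from rfl, closure_Iic]
    exact fun τ hτ => ⟨hτ.1.1, hτ.2⟩
  · rw [show {τ : ℝ | ¬τ ≤ s} = Ioi s by ext; simp, closure_Ioi]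
    exact fun τ hτ => ⟨hτ.2, hτ.1.2⟩

open RealInnerProductSpace in
theorem DifferentiableAt.hasDerivWithinAt_comp_graph {E : Type*} [NormedAddCommGroup E]
    [InnerProductSpace ℝ E] [CompleteSpace E] {V : ℝ → E → ℝ} {γ : ℝ → E} {w x : E}
    {s : Set ℝ} {t : ℝ} (hV : DifferentiableAt ℝ (fun q : ℝ × E => V q.1 q.2) (t, x))
    (hγt : γ t = x) (hγ : HasDerivWithinAt γ w s t) :
    HasDerivWithinAt (fun σ => V σ (γ σ))
      (deriv (fun σ => V σ x) t + ⟪gradient (V t) x, w⟫) s t := by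
  set L := fderiv ℝ (fun q : ℝ × E => V q.1 q.2) (t, x)
  have hL : HasFDerivAt (fun q : ℝ × E => V q.1 q.2) L (t, x) := hV.hasFDerivAt
  have htime : HasDerivAt (fun σ => V σ x) (L (1, 0)) t :=
    hL.comp_hasDerivAt (f := fun σ => (σ, x)) t ((hasDerivAt_id t).prodMk (hasDerivAt_const t x))
  have hslice : HasFDerivAt (V t) (L.comp (ContinuousLinearMap.inr ℝ ℝ E)) x :=
    hL.comp x (hasFDerivAt_prodMk_right t x)
  have hspace : ⟪gradient (V t) x, w⟫ = L (0, w) := by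
    rw [gradient, hslice.fderiv, InnerProductSpace.toDual_symm_apply]
    rfl
  have hgraph : HasDerivWithinAt (fun σ => V σ (γ σ)) (L (1, w)) s t :=
    (hγt ▸ hL).comp_hasDerivWithinAt (f := fun σ => (σ, γ σ)) t
      ((hasDerivWithinAt_id t s).prodMk hγ)
  rwa [htime.deriv, hspace, ← map_add, Prod.mk_add_mk, add_zero, zero_add]

theorem IsLocalMinOn.hasDerivWithinAt_Ici_nonneg {f : ℝ → ℝ} {f' a : ℝ}
    (h : IsLocalMinOn f (Ici a) a) (hf : HasDerivWithinAt f f' (Ici a) a) : 0 ≤ f' := by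
  have hright : ∀ᶠ x in 𝓝[>] a, x ∈ Ici a :=
    eventually_mem_nhdsWithin.mono fun _ hx => Ioi_subset_Ici_self hx
  have hone : (1 : ℝ) ∈ posTangentConeAt (Ici a) a :=
    one_mem_posTangentConeAt_iff_frequently.2 hright.frequently
  simpa using h.hasFDerivWithinAt_nonneg hf.hasFDerivWithinAt hone

def fracRunningCost (tf : ℝ) {n m : ℕ} {U : Set (EuclideanSpace ℝ (Fin m))}
    {ftil : ℝ → EuclideanSpace ℝ (Fin n) → EuclideanSpace ℝ (Fin m) →
      EuclideanSpace ℝ (Fin n)}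
    {r : ℕ} (v : Fin r → ℝ)
    (g : Fin r → ℝ → EuclideanSpace ℝ (Fin n) → EuclideanSpace ℝ (Fin m) → ℝ)
    {t : ℝ} {x0 : EuclideanSpace ℝ (Fin n)} (p : AdmissiblePair tf U ftil t x0) (s : ℝ) : ℝ :=
  ∑ j, (1 / Real.Gamma (v j)) * ∫ τ in t..s, (tf - τ) ^ (v j - 1) * g j τ (p.x τ) (p.u τ)

namespace AdmissiblePair

variable {n m : ℕ} {tf t : ℝ} {U : Set (EuclideanSpace ℝ (Fin m))}
  {ftil : ℝ → EuclideanSpace ℝ (Fin n) → EuclideanSpace ℝ (Fin m) → EuclideanSpace ℝ (Fin n)}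
  {x0 : EuclideanSpace ℝ (Fin n)} (p : AdmissiblePair tf U ftil t x0)
  {β : Type*} [NormedAddCommGroup β]
  {F : ℝ → EuclideanSpace ℝ (Fin n) → EuclideanSpace ℝ (Fin m) → β}
  {r : ℕ} {v : Fin r → ℝ}
  {g : Fin r → ℝ → EuclideanSpace ℝ (Fin n) → EuclideanSpace ℝ (Fin m) → ℝ}

theorem x_start (htf : t ≤ tf) : p.x t = x0 := by
  simpa using p.x_eq t (left_mem_Icc.2 htf)

theorem aestronglyMeasurable_comp
    (hF : Continuous fun q : ℝ × EuclideanSpace ℝ (Fin n) × EuclideanSpace ℝ (Fin m) =>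
      F q.1 q.2.1 q.2.2) :
    AEStronglyMeasurable (fun σ => F σ (p.x σ) (p.u σ)) (volume.restrict (Icc t tf)) := by
  have hu : AEMeasurable p.u (volume.restrict (Icc t tf)) :=
    (aemeasurable_restrict_iff_comap_subtype measurableSet_Icc).2 p.u_meas.aemeasurable
  have hx : AEMeasurable p.x (volume.restrict (Icc t tf)) :=
    p.x_cont.aemeasurable measurableSet_Icc
  exact hF.comp_aestronglyMeasurable
    (aemeasurable_id.prodMk (hx.prodMk hu)).aestronglyMeasurable

theorem exists_bound_comp
    (hF : Continuous fun q : ℝ × EuclideanSpace ℝ (Fin n) × EuclideanSpace ℝ (Fin m) =>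
      F q.1 q.2.1 q.2.2) (hU : IsCompact U) :
    ∃ C, ∀ σ ∈ Icc t tf, ‖F σ (p.x σ) (p.u σ)‖ ≤ C := by
  obtain ⟨C, hC⟩ := (isCompact_Icc.prod ((isCompact_Icc.image_of_continuousOn p.x_cont).prod
    hU)).exists_bound_of_continuousOn hF.continuousOn
  exact ⟨C, fun σ hσ => hC (σ, p.x σ, p.u σ) ⟨hσ, mem_image_of_mem _ hσ, p.u_mem σ hσ⟩⟩

theorem integrableOn_comp
    (hF : Continuous fun q : ℝ × EuclideanSpace ℝ (Fin n) × EuclideanSpace ℝ (Fin m) =>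
      F q.1 q.2.1 q.2.2) (hU : IsCompact U) :
    IntegrableOn (fun σ => F σ (p.x σ) (p.u σ)) (Icc t tf) := by
  obtain ⟨C, hC⟩ := p.exists_bound_comp hF hU
  exact Integrable.of_bound (p.aestronglyMeasurable_comp hF) C
    ((ae_restrict_iff' measurableSet_Icc).2 (ae_of_all _ hC))

theorem integrableOn_rpow_mul_comp {G : ℝ → EuclideanSpace ℝ (Fin n) → EuclideanSpace ℝ (Fin m) → ℝ}
    (hG : Continuous fun q : ℝ × EuclideanSpace ℝ (Fin n) × EuclideanSpace ℝ (Fin m) =>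
      G q.1 q.2.1 q.2.2) (hU : IsCompact U) {r : ℝ} (hr : -1 < r) :
    IntegrableOn (fun σ => (tf - σ) ^ r * G σ (p.x σ) (p.u σ)) (Icc t tf) := by
  obtain ⟨C, hC⟩ := p.exists_bound_comp hG hU
  exact (integrableOn_Icc_sub_rpow hr t tf).mul_bdd (p.aestronglyMeasurable_comp hG)
    ((ae_restrict_iff' measurableSet_Icc).2 (ae_of_all _ hC))

theorem continuousWithinAt_comp
    (hF : Continuous fun q : ℝ × EuclideanSpace ℝ (Fin n) × EuclideanSpace ℝ (Fin m) =>
      F q.1 q.2.1 q.2.2) (htf : t < tf) (hu : ContinuousWithinAt p.u (Ici t) t) :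
    ContinuousWithinAt (fun σ => F σ (p.x σ) (p.u σ)) (Ici t) t := by
  have hx : ContinuousWithinAt p.x (Ici t) t :=
    (continuousWithinAt_Icc_iff_Ici htf).1 (p.x_cont t (left_mem_Icc.2 htf.le))
  exact hF.continuousAt.comp_continuousWithinAt (continuousWithinAt_id.prodMk (hx.prodMk hu))

theorem hasDerivWithinAt_x
    (hftil : Continuous fun q : ℝ × EuclideanSpace ℝ (Fin n) × EuclideanSpace ℝ (Fin m) =>
      ftil q.1 q.2.1 q.2.2) (htf : t < tf) (hu : ContinuousWithinAt p.u (Ici t) t) :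
    HasDerivWithinAt p.x (ftil t x0 (p.u t)) (Ici t) t := by
  have hint := (hasDerivWithinAt_integral_Ici htf (p.aestronglyMeasurable_comp hftil)
    (p.continuousWithinAt_comp hftil htf hu)).const_add x0
  rw [p.x_start htf.le] at hint
  refine hint.congr_of_eventuallyEq ?_ (by simpa using p.x_start htf.le)
  filter_upwards [Icc_mem_nhdsGE htf] with τ hτ using p.x_eq τ hτ

def concat
    (hftil : Continuous fun q : ℝ × EuclideanSpace ℝ (Fin n) × EuclideanSpace ℝ (Fin m) =>
      ftil q.1 q.2.1 q.2.2) (hU : IsCompact U) {s : ℝ} (hs : s ∈ Icc t tf)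
    (q : AdmissiblePair tf U ftil s (p.x s)) : AdmissiblePair tf U ftil t x0 where
  x τ := if τ ≤ s then p.x τ else q.x τ
  u τ := if τ ≤ s then p.u τ else q.u τ
  u_mem τ hτ := by
    split_ifs with hτs
    exacts [p.u_mem τ ⟨hτ.1, hτs.trans hs.2⟩, q.u_mem τ ⟨(not_le.1 hτs).le, hτ.2⟩]
  u_meas := measurable_restrict_Icc_ite hs.2 p.u_meas q.u_meas
  x_cont := continuousOn_Icc_ite (p.x_cont.mono (Icc_subset_Icc_right hs.2)) q.x_cont
    (q.x_start hs.2).symm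
  x_eq τ hτ := by
    rcases le_or_gt τ s with hτs | hsτ
    · rw [if_pos hτs, p.x_eq τ hτ]
      congr 1
      refine integral_congr fun σ hσ => ?_
      rw [uIcc_of_le hτ.1] at hσ
      simp only [if_pos (hσ.2.trans hτs)]
    · rw [if_neg (not_le.2 hsτ), q.x_eq τ ⟨hsτ.le, hτ.2⟩, integral_comp_ite_le ftil hs.1 hsτ.le
        ((p.integrableOn_comp hftil hU).intervalIntegrable_of_mem_Icc
          (left_mem_Icc.2 (hs.1.trans hs.2)) hs)
        ((q.integrableOn_comp hftil hU).intervalIntegrable_of_mem_Icc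
          (left_mem_Icc.2 hs.2) ⟨hsτ.le, hτ.2⟩),
        ← add_assoc, ← p.x_eq s hs]

theorem fracCost_concat
    (hftil : Continuous fun q : ℝ × EuclideanSpace ℝ (Fin n) × EuclideanSpace ℝ (Fin m) =>
      ftil q.1 q.2.1 q.2.2) (hU : IsCompact U) {s : ℝ} (hs : s ∈ Icc t tf)
    (q : AdmissiblePair tf U ftil s (p.x s)) (hv : ∀ j, 0 < v j)
    (hg : ∀ j, Continuous fun q : ℝ × EuclideanSpace ℝ (Fin n) × EuclideanSpace ℝ (Fin m) =>
      g j q.1 q.2.1 q.2.2) (h : EuclideanSpace ℝ (Fin n) → ℝ) :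
    fracCost tf v g h (p.concat hftil hU hs q) =
      fracRunningCost tf v g p s + fracCost tf v g h q := by
  have hx : (p.concat hftil hU hs q).x tf = q.x tf := by
    change (if tf ≤ s then p.x tf else q.x tf) = q.x tf
    split_ifs with htfs
    · obtain rfl := le_antisymm hs.2 htfs
      exact (q.x_start le_rfl).symm
    · rfl
  have hsplit : ∀ j, ∫ τ in t..tf, (tf - τ) ^ (v j - 1) *
      g j τ ((p.concat hftil hU hs q).x τ) ((p.concat hftil hU hs q).u τ) =
      (∫ τ in t..s, (tf - τ) ^ (v j - 1) * g j τ (p.x τ) (p.u τ)) +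
        ∫ τ in s..tf, (tf - τ) ^ (v j - 1) * g j τ (q.x τ) (q.u τ) := fun j =>
    have hr : -1 < v j - 1 := by linarith [hv j]
    integral_comp_ite_le (fun τ y w => (tf - τ) ^ (v j - 1) * g j τ y w) hs.1 hs.2
      ((p.integrableOn_rpow_mul_comp (hg j) hU hr).intervalIntegrable_of_mem_Icc
        (left_mem_Icc.2 (hs.1.trans hs.2)) hs)
      ((q.integrableOn_rpow_mul_comp (hg j) hU hr).intervalIntegrable_of_mem_Icc
        (left_mem_Icc.2 hs.2) (right_mem_Icc.2 hs.2))
  simp only [fracCost, fracRunningCost, hsplit, hx, mul_add, Finset.sum_add_distrib, add_assoc]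

theorem le_fracRunningCost_add_value
    (hftil : Continuous fun q : ℝ × EuclideanSpace ℝ (Fin n) × EuclideanSpace ℝ (Fin m) =>
      ftil q.1 q.2.1 q.2.2) (hU : IsCompact U) (hv : ∀ j, 0 < v j)
    (hg : ∀ j, Continuous fun q : ℝ × EuclideanSpace ℝ (Fin n) × EuclideanSpace ℝ (Fin m) =>
      g j q.1 q.2.1 q.2.2) {h : EuclideanSpace ℝ (Fin n) → ℝ}
    {V : ℝ → EuclideanSpace ℝ (Fin n) → ℝ} {s : ℝ} (hs : s ∈ Icc t tf)
    (hVt : (V t x0 : EReal) = fracValue tf U ftil v g h t x0)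
    (hVs : (V s (p.x s) : EReal) = fracValue tf U ftil v g h s (p.x s)) :
    V t x0 ≤ fracRunningCost tf v g p s + V s (p.x s) := by
  have hcost : ∀ q : AdmissiblePair tf U ftil s (p.x s),
      V t x0 - fracRunningCost tf v g p s ≤ fracCost tf v g h q := fun q => by
    have hle : fracValue tf U ftil v g h t x0 ≤
        (fracCost tf v g h (p.concat hftil hU hs q) : EReal) :=
      iInf_le _ _
    rw [← hVt, p.fracCost_concat hftil hU hs q hv hg h, EReal.coe_le_coe_iff] at hle
    linarith
  have hle : ((V t x0 - fracRunningCost tf v g p s : ℝ) : EReal) ≤ V s (p.x s) :=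
    hVs ▸ le_iInf fun q => EReal.coe_le_coe_iff.2 (hcost q)
  linarith [EReal.coe_le_coe_iff.1 hle]

theorem hasDerivWithinAt_fracRunningCost
    (hg : ∀ j, Continuous fun q : ℝ × EuclideanSpace ℝ (Fin n) × EuclideanSpace ℝ (Fin m) =>
      g j q.1 q.2.1 q.2.2) (htf : t < tf) (hu : ContinuousWithinAt p.u (Ici t) t) :
    HasDerivWithinAt (fracRunningCost tf v g p)
      (∑ j, 1 / Real.Gamma (v j) * (tf - t) ^ (v j - 1) * g j t x0 (p.u t)) (Ici t) t := by
  have hkernel_meas : ∀ j, Measurable fun σ : ℝ => (tf - σ) ^ (v j - 1) := fun j =>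
    (measurable_const.sub measurable_id).pow_const _
  have hkernel_cont : ∀ j, ContinuousAt (fun σ : ℝ => (tf - σ) ^ (v j - 1)) t := fun j =>
    (continuousAt_const.sub continuousAt_id).rpow_const (Or.inl (sub_pos.2 htf).ne')
  have hsum := HasDerivWithinAt.fun_sum (u := Finset.univ) fun j _ =>
    (hasDerivWithinAt_integral_Ici (Φ := fun σ => (tf - σ) ^ (v j - 1) * g j σ (p.x σ) (p.u σ))
      htf ((hkernel_meas j).aestronglyMeasurable.mul (p.aestronglyMeasurable_comp (hg j)))
      ((hkernel_cont j).continuousWithinAt.mul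
        (p.continuousWithinAt_comp (hg j) htf hu))).const_mul (1 / Real.Gamma (v j))
  simp only [p.x_start htf.le, ← mul_assoc] at hsum
  exact hsum

end AdmissiblePair

open RealInnerProductSpace in
theorem fracHJB_subsolution_inequality_general
    (t0 tf : ℝ) (n m : ℕ)
    (U : Set (EuclideanSpace ℝ (Fin m))) (hUc : IsCompact U)
    (ftil : ℝ → EuclideanSpace ℝ (Fin n) → EuclideanSpace ℝ (Fin m) →
      EuclideanSpace ℝ (Fin n))
    (hftil : Continuous fun p : ℝ × EuclideanSpace ℝ (Fin n) × EuclideanSpace ℝ (Fin m) =>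
      ftil p.1 p.2.1 p.2.2)
    (r : ℕ) (v : Fin r → ℝ) (hv : ∀ j, 0 < v j)
    (g : Fin r → ℝ → EuclideanSpace ℝ (Fin n) → EuclideanSpace ℝ (Fin m) → ℝ)
    (hg : ∀ j, Continuous fun p : ℝ × EuclideanSpace ℝ (Fin n) × EuclideanSpace ℝ (Fin m) =>
      g j p.1 p.2.1 p.2.2)
    (h : EuclideanSpace ℝ (Fin n) → ℝ)
    (V : ℝ → EuclideanSpace ℝ (Fin n) → ℝ)
    (hV : ∀ s ∈ Set.Icc t0 tf, ∀ y, ((V s y : ℝ) : EReal) = fracValue tf U ftil v g h s y)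
    (t : ℝ) (ht : t ∈ Set.Ico t0 tf) (x : EuclideanSpace ℝ (Fin n))
    (hVdiff : DifferentiableAt ℝ (fun p : ℝ × EuclideanSpace ℝ (Fin n) => V p.1 p.2) (t, x))
    (ω : EuclideanSpace ℝ (Fin m))
    (p : AdmissiblePair tf U ftil t x)
    (hp_rc : ContinuousWithinAt p.u (Set.Ici t) t) (hp_t : p.u t = ω) :
    deriv (fun s => V s x) t
        + (∑ j, (1 / Real.Gamma (v j)) * (tf - t) ^ (v j - 1) * g j t x ω)
        + ⟪gradient (fun y => V t y) x, ftil t x ω⟫ ≥ 0 := by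
  obtain ⟨ht0, htf⟩ := ht
  have hx : p.x t = x := p.x_start htf.le
  have hmin : IsLocalMinOn (fun s => fracRunningCost tf v g p s + V s (p.x s)) (Ici t) t := by
    filter_upwards [Icc_mem_nhdsGE htf] with s hs
    simpa [fracRunningCost, hx] using p.le_fracRunningCost_add_value hftil hUc hv hg hs
      (hV t ⟨ht0, htf.le⟩ x) (hV s ⟨ht0.trans hs.1, hs.2⟩ (p.x s))
  have hderiv := (p.hasDerivWithinAt_fracRunningCost (v := v) hg htf hp_rc).add
    (hVdiff.hasDerivWithinAt_comp_graph hx (p.hasDerivWithinAt_x hftil htf hp_rc))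
  have hnonneg := hmin.hasDerivWithinAt_Ici_nonneg hderiv
  rw [hp_t] at hnonneg
  linarith

open RealInnerProductSpace in
/-- **Subsolution inequality for the fractional HJB equation.** Assume the value
function is real-valued (equal to `V`) on `[t₀, t_f] × ℝⁿ` and differentiable at a
point `(t, x)` with `t ∈ [t₀, t_f)`. If `ω ∈ U` is such that there exists an
admissible pair from `(t, x)` whose control is right-continuous at `t` with value
`ω` there, then
`∂V/∂t (t,x) + Σ_j (1/Γ(v_j)) (t_f - t)^(v_j-1) g_j(t,x,ω) + ⟨∇ₓV(t,x), f̃(t,x,ω)⟩ ≥ 0`. -/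
theorem fracHJB_subsolution_inequality
    (t0 tf : ℝ) (ht0f : t0 < tf) (n m : ℕ)
    (U : Set (EuclideanSpace ℝ (Fin m))) (hUc : IsCompact U) (hUne : U.Nonempty)
    (ftil : ℝ → EuclideanSpace ℝ (Fin n) → EuclideanSpace ℝ (Fin m) →
      EuclideanSpace ℝ (Fin n))
    (hftil : Continuous fun p : ℝ × EuclideanSpace ℝ (Fin n) × EuclideanSpace ℝ (Fin m) =>
      ftil p.1 p.2.1 p.2.2)
    (r : ℕ) (hr : 1 ≤ r) (v : Fin r → ℝ) (hv : ∀ j, 0 < v j)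
    (g : Fin r → ℝ → EuclideanSpace ℝ (Fin n) → EuclideanSpace ℝ (Fin m) → ℝ)
    (hg : ∀ j, Continuous fun p : ℝ × EuclideanSpace ℝ (Fin n) × EuclideanSpace ℝ (Fin m) =>
      g j p.1 p.2.1 p.2.2)
    (h : EuclideanSpace ℝ (Fin n) → ℝ) (hh : Continuous h)
    (V : ℝ → EuclideanSpace ℝ (Fin n) → ℝ)
    (hV : ∀ s ∈ Set.Icc t0 tf, ∀ y, ((V s y : ℝ) : EReal) = fracValue tf U ftil v g h s y)
    (t : ℝ) (ht : t ∈ Set.Ico t0 tf) (x : EuclideanSpace ℝ (Fin n))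
    (hVdiff : DifferentiableAt ℝ (fun p : ℝ × EuclideanSpace ℝ (Fin n) => V p.1 p.2) (t, x))
    (ω : EuclideanSpace ℝ (Fin m)) (hω : ω ∈ U)
    (p : AdmissiblePair tf U ftil t x)
    (hp_rc : ContinuousWithinAt p.u (Set.Ici t) t) (hp_t : p.u t = ω) :
    deriv (fun s => V s x) t
        + (∑ j, (1 / Real.Gamma (v j)) * (tf - t) ^ (v j - 1) * g j t x ω)
        + ⟪gradient (fun y => V t y) x, ftil t x ω⟫ ≥ 0 :=
  fracHJB_subsolution_inequality_general t0 tf n m U hUc ftil hftil r v hv g hg h V hV t ht x hVdiff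
    ω p hp_rc hp_t
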